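/- For all n ≥ 3, the simple centralizer of x_{n−1} in SB_n has cardinality c_n(x_{n−1}) = 2 · F_{2n−5}. -/

import Mathlib

/-- The defining relations of the positive braid monoid `MB_∞` on generators
`x i`, `i : ℕ+`: the braid relations and the far-commutation relations. -/
def BraidRel : FreeMonoid ℕ+ → FreeMonoid ℕ+ → Prop := fun a b =>
  (∃ i : ℕ+, a = FreeMonoid.of (i + 1) * FreeMonoid.of i * FreeMonoid.of (i + 1) ∧
      b = FreeMonoid.of i * FreeMonoid.of (i + 1) * FreeMonoid.of i) ∨
  (∃ i j : ℕ+, i + 2 ≤ j ∧ a = FreeMonoid.of i * FreeMonoid.of j ∧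
      b = FreeMonoid.of j * FreeMonoid.of i)

/-- The congruence generated by the braid relations. -/
def braidCon : Con (FreeMonoid ℕ+) := conGen BraidRel

/-- The positive braid monoid `MB_∞`. -/
abbrev MB : Type := braidCon.Quotient

/-- The generator `x_i` of `MB_∞`, for `i : ℕ+`. -/
def braidGen (i : ℕ+) : MB := braidCon.mk' (FreeMonoid.of i)

/-- The generator `x_i` of `MB_∞`, indexed by a natural number `i ≥ 1`
(junk value `x_1` for `i = 0`). -/
def X (i : ℕ) : MB := braidGen ⟨max i 1, lt_of_lt_of_le one_pos (le_max_right i 1)⟩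

/-- `x_i` divides `β`: `β = δ * x_i * ε` for some `δ ε ∈ MB_∞`. -/
def GenDvd (i : ℕ) (β : MB) : Prop := ∃ δ ε : MB, β = δ * X i * ε

/-- `x_i` left-divides `β`: `β = x_i * ε` for some `ε ∈ MB_∞`. -/
def GenDvdL (i : ℕ) (β : MB) : Prop := ∃ ε : MB, β = X i * ε

/-- `x_i` right-divides `β`: `β = δ * x_i` for some `δ ∈ MB_∞`. -/
def GenDvdR (i : ℕ) (β : MB) : Prop := ∃ δ : MB, β = δ * X i

/-- The set `SB_n` of simple braids in `MB_n`: products of words in the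
generators `x_1, …, x_{n-1}` in which each generator appears at most once. -/
def SB (n : ℕ) : Set MB :=
  {β | ∃ w : List ℕ, w.Nodup ∧ (∀ i ∈ w, 1 ≤ i ∧ i < n) ∧ β = (w.map X).prod}

/-- The simple centralizer `C_n(β)` of `β` in `SB_n`. -/
def C (n : ℕ) (β : MB) : Set MB := {γ ∈ SB n | β * γ = γ * β}

/-- `c_n(β)`, the cardinality of the simple centralizer `C_n(β)`. -/
noncomputable def c (n : ℕ) (β : MB) : ℕ := (C n β).ncard

/-!
Sending `x_i` to the transposition `(i i+1)` gives `braidPerm : MB_∞ →* Perm ℕ`, which is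
injective on simple braids: the last letter `j` of a simple word is a descent of its permutation,
and conversely a descent `j` can be commuted to the end of every simple word with that
permutation, so one can peel off letters by induction. A simple word contains the letter `a`
iff its permutation carries some point `≤ a` above `a`. A permutation commuting with `(n-1 n)`
and mapping `{0, …, n}` into itself maps `{0, …, n-2}` into itself, so a simple braid commuting
with `x_{n-1}` avoids `x_{n-2}`; commuting `x_{n-1}` to the end, it is `β` or `β x_{n-1}` with
`β ∈ SB_{n-2}`. Finally `|SB_{k+1}| = F_{2k+1}`: a simple permutation using the top letter `k+1`
is `π (k+1 k+2)` with `π ∈ SB_{k+1}`, or `(k+1 k+2) π` with `π` using the letter `k`, and these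
two counts give the Fibonacci recursion.
-/

open Equiv

def adjSwap (i : ℕ) : Perm ℕ := swap i (i + 1)

@[simp] lemma adjSwap_apply_self (i : ℕ) : adjSwap i i = i + 1 := swap_apply_left _ _

@[simp] lemma adjSwap_apply_succ (i : ℕ) : adjSwap i (i + 1) = i := swap_apply_right _ _

lemma adjSwap_apply_of_ne {i x : ℕ} (h₁ : x ≠ i) (h₂ : x ≠ i + 1) : adjSwap i x = x :=
  swap_apply_of_ne_of_ne h₁ h₂

lemma adjSwap_apply_le_iff {i a : ℕ} (h : i ≠ a) (x : ℕ) : adjSwap i x ≤ a ↔ x ≤ a := by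
  simp only [adjSwap, swap_apply_def]
  split_ifs <;> omega

lemma commute_adjSwap {i j : ℕ} (h : i + 2 ≤ j) : Commute (adjSwap i) (adjSwap j) := by
  ext x
  simp only [adjSwap, Perm.mul_apply, swap_apply_def]
  split_ifs <;> omega

lemma adjSwap_braid (i : ℕ) :
    adjSwap (i + 1) * adjSwap i * adjSwap (i + 1) = adjSwap i * adjSwap (i + 1) * adjSwap i := by
  ext x
  simp only [adjSwap, Perm.mul_apply, swap_apply_def]
  split_ifs <;> omega

def braidPerm : MB →* Perm ℕ :=
  braidCon.lift (FreeMonoid.lift fun i : ℕ+ => adjSwap i) <| Con.conGen_le.mpr fun a b h => by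
    rcases h with ⟨i, rfl, rfl⟩ | ⟨i, j, hij, rfl, rfl⟩
    · simpa using adjSwap_braid i
    · simpa using (commute_adjSwap (by exact_mod_cast hij)).eq

lemma X_eq_braidGen {i : ℕ} (hi : 1 ≤ i) : X i = braidGen ⟨i, hi⟩ := by
  simp only [X, Nat.max_eq_left hi]

lemma braidPerm_X {i : ℕ} (hi : 1 ≤ i) : braidPerm (X i) = adjSwap i := by
  rw [X_eq_braidGen hi]
  exact Con.lift_mk' _ _

lemma commute_X {i j : ℕ} (hi : 1 ≤ i) (hij : i + 2 ≤ j) : Commute (X i) (X j) := by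
  have hj : 1 ≤ j := by omega
  have hij' : (⟨i, hi⟩ + 2 : ℕ+) ≤ ⟨j, hj⟩ := PNat.coe_le_coe _ _ |>.mp hij
  rw [X_eq_braidGen hi, X_eq_braidGen hj]
  unfold Commute SemiconjBy braidGen
  rw [← map_mul, ← map_mul]
  exact braidCon.eq.mpr <| ConGen.Rel.of _ _ <| Or.inr ⟨_, _, hij', rfl, rfl⟩

lemma braidPerm_prod_map_X {w : List ℕ} (hw : ∀ a ∈ w, 1 ≤ a) :
    braidPerm (w.map X).prod = (w.map adjSwap).prod := by
  rw [map_list_prod, List.map_map]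
  exact congrArg List.prod <| List.map_congr_left fun a ha => braidPerm_X (hw a ha)

lemma List.prod_map_append_cons_eq_prod_mul {α M : Type*} [Monoid M] (f : α → M) (s t : List α)
    {a : α} (h : ∀ b ∈ t, Commute (f a) (f b)) :
    ((s ++ a :: t).map f).prod = ((s ++ t).map f).prod * f a := by
  have hc : Commute (f a) (t.map f).prod :=
    Commute.list_prod_right _ _ <| List.forall_mem_map.mpr h
  simp only [List.map_append, List.map_cons, List.prod_append, List.prod_cons, hc.eq, mul_assoc]

lemma List.prod_map_append_cons_eq_mul_prod {α M : Type*} [Monoid M] (f : α → M) (s t : List α)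
    {a : α} (h : ∀ b ∈ s, Commute (f a) (f b)) :
    ((s ++ a :: t).map f).prod = f a * ((s ++ t).map f).prod := by
  have hc : Commute (f a) (s.map f).prod :=
    Commute.list_prod_right _ _ <| List.forall_mem_map.mpr h
  simp only [List.map_append, List.map_cons, List.prod_append, List.prod_cons, ← mul_assoc,
    hc.eq]

lemma commute_X_prod_map_X {i : ℕ} {w : List ℕ} (hw : ∀ a ∈ w, 1 ≤ a ∧ a + 2 ≤ i) :
    Commute (X i) (w.map X).prod :=
  Commute.list_prod_right _ _ <| List.forall_mem_map.mpr fun a ha =>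
    (commute_X (hw a ha).1 (hw a ha).2).symm

lemma prod_map_adjSwap_apply_le_iff {w : List ℕ} {a : ℕ} (ha : a ∉ w) (x : ℕ) :
    (w.map adjSwap).prod x ≤ a ↔ x ≤ a := by
  induction w with
  | nil => rfl
  | cons b w ih =>
    rw [List.mem_cons, not_or] at ha
    simp only [List.map_cons, List.prod_cons, Perm.mul_apply,
      adjSwap_apply_le_iff (Ne.symm ha.1), ih ha.2]

lemma prod_map_adjSwap_apply_of_forall_lt {w : List ℕ} {x : ℕ} (hw : ∀ a ∈ w, a + 1 < x) :
    (w.map adjSwap).prod x = x := by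
  induction w with
  | nil => rfl
  | cons b w ih =>
    have hb := hw b List.mem_cons_self
    rw [List.map_cons, List.prod_cons, Perm.mul_apply,
      ih fun a ha => hw a (List.mem_cons_of_mem b ha), adjSwap_apply_of_ne (by omega) (by omega)]

lemma exists_le_lt_prod_map_adjSwap_apply {w : List ℕ} {a : ℕ} (hw : w.Nodup) (ha : a ∈ w) :
    ∃ x ≤ a, a < (w.map adjSwap).prod x := by
  obtain ⟨s, t, rfl⟩ := List.append_of_mem ha
  obtain ⟨has, -⟩ := List.nodup_cons.mp (List.nodup_middle.mp hw)
  have hs : a ∉ s := fun h => has (List.mem_append_left t h)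
  have ht : a ∉ t := fun h => has (List.mem_append_right s h)
  obtain ⟨x, hx⟩ := (t.map adjSwap).prod.surjective a
  refine ⟨x, (prod_map_adjSwap_apply_le_iff ht x).mp (hx.symm ▸ le_rfl), ?_⟩
  simp only [List.map_append, List.map_cons, List.prod_append, List.prod_cons, Perm.mul_apply, hx,
    adjSwap_apply_self]
  exact not_le.mp <| (prod_map_adjSwap_apply_le_iff hs _).not.mpr (by omega)

lemma prod_map_adjSwap_apply_succ_le {w : List ℕ} {a : ℕ} (hw : w.Nodup)
    (hwa : ∀ b ∈ w, b ≤ a) (ha : a ∈ w) : (w.map adjSwap).prod (a + 1) ≤ a := by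
  have hcut : ∀ x, (w.map adjSwap).prod x ≤ a + 1 ↔ x ≤ a + 1 :=
    prod_map_adjSwap_apply_le_iff fun h => by have := hwa _ h; omega
  obtain ⟨x, hx, hlt⟩ := exists_le_lt_prod_map_adjSwap_apply hw ha
  have hx' : (w.map adjSwap).prod x = a + 1 := by have := (hcut x).mpr (by omega); omega
  have hne : (w.map adjSwap).prod (a + 1) ≠ a + 1 := fun h =>
    absurd ((w.map adjSwap).prod.injective (h.trans hx'.symm)) (by omega)
  have := (hcut (a + 1)).mpr le_rfl
  omega

lemma prod_map_adjSwap_ne_one {w : List ℕ} (hw : w.Nodup) (hne : w ≠ []) :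
    (w.map adjSwap).prod ≠ 1 := fun h => by
  obtain ⟨x, hx, hlt⟩ := exists_le_lt_prod_map_adjSwap_apply hw (List.head_mem hne)
  rw [h, Perm.one_apply] at hlt
  omega

/-- A permutation commuting with `adjSwap (k + 1)` permutes the fixed points of that swap. -/
lemma apply_le_of_commute_adjSwap {π : Perm ℕ} {k x : ℕ} (hc : Commute (adjSwap (k + 1)) π)
    (hx : x ≤ k) (hπx : π x ≤ k + 2) : π x ≤ k := by
  have hfix : adjSwap (k + 1) (π x) = π x := by
    rw [← Perm.mul_apply, hc.eq, Perm.mul_apply, adjSwap_apply_of_ne (by omega) (by omega)]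
  have h₁ : π x ≠ k + 1 := fun h => by simp [h] at hfix
  have h₂ : π x ≠ k + 2 := fun h => by simp [h] at hfix
  omega

lemma exists_prod_map_X_eq_mul_X_of_descent {j : ℕ} (hj : 1 ≤ j) {w : List ℕ} (hw : w.Nodup)
    (hw₁ : ∀ a ∈ w, 1 ≤ a) (hdes : (w.map adjSwap).prod (j + 1) < (w.map adjSwap).prod j) :
    ∃ v ⊆ w, v.Nodup ∧ (w.map X).prod = (v.map X).prod * X j := by
  induction w using List.reverseRecOn with
  | nil => simp at hdes
  | append_singleton u i ih =>
    obtain ⟨hiu, hu⟩ := (List.nodup_concat u _).mp (by simpa using hw)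
    simp only [List.map_append, List.map_singleton, List.prod_append, List.prod_singleton,
      Perm.mul_apply] at hdes ⊢
    obtain rfl | hij := eq_or_ne i j
    · exact ⟨u, List.subset_append_left _ _, hu, rfl⟩
    have hcut := prod_map_adjSwap_apply_le_iff hiu
    have hfar : i + 2 ≤ j ∨ j + 2 ≤ i := by
      by_contra hnear
      obtain rfl | rfl : j = i + 1 ∨ i = j + 1 := by omega
      · rw [adjSwap_apply_succ, adjSwap_apply_of_ne (by omega) (by omega)] at hdes
        have := (hcut i).mpr le_rfl
        have := (hcut (i + 1 + 1)).not.mpr (by omega)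
        omega
      · rw [adjSwap_apply_self, adjSwap_apply_of_ne (by omega) (by omega)] at hdes
        have := (hcut j).mpr (by omega)
        have := (hcut (j + 1 + 1)).not.mpr (by omega)
        omega
    rw [adjSwap_apply_of_ne (x := j) (by omega) (by omega),
      adjSwap_apply_of_ne (x := j + 1) (by omega) (by omega)] at hdes
    obtain ⟨v, hvu, hv, hPv⟩ := ih hu (fun a ha => hw₁ a (List.mem_append_left _ ha)) hdes
    have hi : 1 ≤ i := hw₁ i (by simp)
    have hcomm : Commute (X j) (X i) := by
      rcases hfar with h | h
      · exact (commute_X hi h).symm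
      · exact commute_X hj h
    refine ⟨v ++ [i], List.append_subset.mpr ⟨List.Subset.trans hvu (List.subset_append_left _ _),
      List.subset_append_right _ _⟩, ?_, ?_⟩
    · simpa using hv.concat fun h => hiu (hvu h)
    · simp only [List.map_append, List.map_singleton, List.prod_append, List.prod_singleton, hPv,
        mul_assoc, hcomm.eq]

lemma prod_map_X_eq_of_prod_map_adjSwap_eq {w w' : List ℕ} (hw : w.Nodup) (hw' : w'.Nodup)
    (hw₁ : ∀ a ∈ w, 1 ≤ a) (hw₁' : ∀ a ∈ w', 1 ≤ a)
    (h : (w.map adjSwap).prod = (w'.map adjSwap).prod) : (w.map X).prod = (w'.map X).prod := by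
  induction w using List.reverseRecOn generalizing w' with
  | nil =>
    obtain rfl : w' = [] := by
      by_contra hne
      exact prod_map_adjSwap_ne_one hw' hne h.symm
    rfl
  | append_singleton u j ih =>
    obtain ⟨hju, hu⟩ := (List.nodup_concat u _).mp (by simpa using hw)
    have hj : 1 ≤ j := hw₁ j (by simp)
    simp only [List.map_append, List.map_singleton, List.prod_append, List.prod_singleton] at h ⊢
    have hdes : (w'.map adjSwap).prod (j + 1) < (w'.map adjSwap).prod j := by
      simp only [← h, Perm.mul_apply, adjSwap_apply_self, adjSwap_apply_succ]
      have hcut := prod_map_adjSwap_apply_le_iff hju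
      have := (hcut j).mpr le_rfl
      have := (hcut (j + 1)).not.mpr (by omega)
      omega
    obtain ⟨v, hvw', hv, hw'v⟩ := exists_prod_map_X_eq_mul_X_of_descent hj hw' hw₁' hdes
    have hv₁ : ∀ a ∈ v, 1 ≤ a := fun a ha => hw₁' a (hvw' ha)
    have huv : (u.map adjSwap).prod = (v.map adjSwap).prod := by
      have := congrArg braidPerm hw'v
      rw [map_mul, braidPerm_prod_map_X hw₁', braidPerm_prod_map_X hv₁, braidPerm_X hj] at this
      exact mul_right_cancel (h.trans this)
    rw [hw'v, ih hu hv (fun a ha => hw₁ a (List.mem_append_left _ ha)) hv₁ huv]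

lemma braidPerm_injOn_SB (n : ℕ) : Set.InjOn braidPerm (SB n) := by
  rintro _ ⟨w, hw, hwn, rfl⟩ _ ⟨w', hw', hwn', rfl⟩ h
  have hw₁ : ∀ a ∈ w, 1 ≤ a := fun a ha => (hwn a ha).1
  have hw₁' : ∀ a ∈ w', 1 ≤ a := fun a ha => (hwn' a ha).1
  rw [braidPerm_prod_map_X hw₁, braidPerm_prod_map_X hw₁'] at h
  exact prod_map_X_eq_of_prod_map_adjSwap_eq hw hw' hw₁ hw₁' h

lemma notMem_of_commute_adjSwap {w : List ℕ} {m : ℕ} (hw : w.Nodup) (hwm : ∀ a ∈ w, a ≤ m + 1)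
    (hc : Commute (adjSwap (m + 1)) (w.map adjSwap).prod) : m ∉ w := fun hm => by
  obtain ⟨x, hx, hlt⟩ := exists_le_lt_prod_map_adjSwap_apply hw hm
  have hcut := prod_map_adjSwap_apply_le_iff (a := m + 2) (fun h => by have := hwm _ h; omega) x
  have := apply_le_of_commute_adjSwap hc hx (hcut.mpr (by omega))
  omega

lemma C_succ_succ_X_succ_subset (m : ℕ) :
    C (m + 2) (X (m + 1)) ⊆ SB m ∪ (· * X (m + 1)) '' SB m := by
  rintro _ ⟨⟨w, hw, hwn, rfl⟩, hcomm⟩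
  have hw₁ : ∀ a ∈ w, 1 ≤ a := fun a ha => (hwn a ha).1
  have hm : m ∉ w := by
    refine notMem_of_commute_adjSwap hw (fun a ha => by have := hwn a ha; omega) ?_
    have := congrArg braidPerm hcomm
    rwa [map_mul, map_mul, braidPerm_prod_map_X hw₁, braidPerm_X (by omega)] at this
  by_cases htop : m + 1 ∈ w
  · obtain ⟨s, t, rfl⟩ := List.append_of_mem htop
    obtain ⟨hst, hnd⟩ := List.nodup_cons.mp (List.nodup_middle.mp hw)
    have hlt : ∀ a ∈ s ++ t, 1 ≤ a ∧ a < m := fun a ha => by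
      have hmem := ((List.sublist_cons_self (m + 1) t).append_left s).subset ha
      have := hwn a hmem
      have : a ≠ m := fun h => hm (h ▸ hmem)
      have : a ≠ m + 1 := fun h => hst (h ▸ ha)
      omega
    refine Or.inr ⟨_, ⟨s ++ t, hnd, hlt, rfl⟩,
      (List.prod_map_append_cons_eq_prod_mul X s t fun b hb => ?_).symm⟩
    have := hlt b (List.mem_append_right s hb)
    exact (commute_X this.1 (by omega)).symm
  · refine Or.inl ⟨w, hw, fun a ha => ?_, rfl⟩
    have := hwn a ha
    have : a ≠ m := fun h => hm (h ▸ ha)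
    have : a ≠ m + 1 := fun h => htop (h ▸ ha)
    omega

lemma SB_union_image_mul_X_subset_C (m : ℕ) :
    SB m ∪ (· * X (m + 1)) '' SB m ⊆ C (m + 2) (X (m + 1)) := by
  have hcomm : ∀ w : List ℕ, (∀ a ∈ w, 1 ≤ a ∧ a < m) → Commute (X (m + 1)) (w.map X).prod :=
    fun w hwm => commute_X_prod_map_X fun a ha => ⟨(hwm a ha).1, by have := (hwm a ha).2; omega⟩
  rintro _ (⟨w, hw, hwm, rfl⟩ | ⟨_, ⟨w, hw, hwm, rfl⟩, rfl⟩)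
  · exact ⟨⟨w, hw, fun a ha => ⟨(hwm a ha).1, by have := (hwm a ha).2; omega⟩, rfl⟩,
      (hcomm w hwm).eq⟩
  · refine ⟨⟨w ++ [m + 1], ?_, fun a ha => ?_, by simp⟩, ((hcomm w hwm).mul_right (.refl _)).eq⟩
    · simpa using hw.concat fun h => by have := (hwm _ h).2; omega
    · rcases List.mem_append.mp ha with ha | ha
      · have := hwm a ha; omega
      · rw [List.mem_singleton.mp ha]; omega

theorem C_succ_succ_X_succ (m : ℕ) : C (m + 2) (X (m + 1)) = SB m ∪ (· * X (m + 1)) '' SB m :=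
  (C_succ_succ_X_succ_subset m).antisymm (SB_union_image_mul_X_subset_C m)

def simplePerms (n : ℕ) : Set (Perm ℕ) :=
  {π | ∃ w : List ℕ, w.Nodup ∧ (∀ i ∈ w, 1 ≤ i ∧ i < n) ∧ π = (w.map adjSwap).prod}

def topSimplePerms (n : ℕ) : Set (Perm ℕ) :=
  {π | ∃ w : List ℕ, w.Nodup ∧ (∀ i ∈ w, 1 ≤ i ∧ i ≤ n) ∧ n ∈ w ∧ π = (w.map adjSwap).prod}

lemma image_braidPerm_SB (n : ℕ) : braidPerm '' SB n = simplePerms n := by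
  ext π
  constructor
  · rintro ⟨_, ⟨w, hw, hwn, rfl⟩, rfl⟩
    exact ⟨w, hw, hwn, braidPerm_prod_map_X fun a ha => (hwn a ha).1⟩
  · rintro ⟨w, hw, hwn, rfl⟩
    exact ⟨_, ⟨w, hw, hwn, rfl⟩, braidPerm_prod_map_X fun a ha => (hwn a ha).1⟩

lemma apply_of_mem_simplePerms {n x : ℕ} {π : Perm ℕ} (hπ : π ∈ simplePerms n) (hx : n < x) :
    π x = x := by
  obtain ⟨w, -, hwn, rfl⟩ := hπ
  exact prod_map_adjSwap_apply_of_forall_lt fun a ha => by have := (hwn a ha).2; omega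

lemma apply_succ_le_of_mem_topSimplePerms {n : ℕ} {π : Perm ℕ} (hπ : π ∈ topSimplePerms n) :
    π (n + 1) ≤ n := by
  obtain ⟨w, hw, hwn, hn, rfl⟩ := hπ
  exact prod_map_adjSwap_apply_succ_le hw (fun a ha => (hwn a ha).2) hn

lemma simplePerms_zero : simplePerms 0 = {1} := by
  ext π
  constructor
  · rintro ⟨w, -, hw, rfl⟩
    obtain rfl : w = [] := List.eq_nil_iff_forall_not_mem.mpr fun a ha => by
      have := hw a ha; omega
    rfl
  · rintro rfl
    exact ⟨[], List.nodup_nil, by simp, rfl⟩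

lemma topSimplePerms_zero : topSimplePerms 0 = ∅ :=
  Set.eq_empty_of_forall_notMem fun _ ⟨w, _, hw, h0, _⟩ => by have := hw 0 h0; omega

lemma simplePerms_succ (n : ℕ) : simplePerms (n + 1) = simplePerms n ∪ topSimplePerms n := by
  ext π
  constructor
  · rintro ⟨w, hw, hwn, rfl⟩
    by_cases hn : n ∈ w
    · exact Or.inr ⟨w, hw, fun a ha => ⟨(hwn a ha).1, by have := (hwn a ha).2; omega⟩, hn, rfl⟩
    · refine Or.inl ⟨w, hw, fun a ha => ⟨(hwn a ha).1, ?_⟩, rfl⟩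
      have := (hwn a ha).2
      have : a ≠ n := fun h => hn (h ▸ ha)
      omega
  · rintro (⟨w, hw, hwn, rfl⟩ | ⟨w, hw, hwn, -, rfl⟩) <;>
      exact ⟨w, hw, fun a ha => ⟨(hwn a ha).1, by have := (hwn a ha).2; omega⟩, rfl⟩

lemma disjoint_simplePerms_topSimplePerms (n : ℕ) :
    Disjoint (simplePerms n) (topSimplePerms n) :=
  Set.disjoint_left.mpr fun _ hπ hπ' => by
    have := apply_of_mem_simplePerms hπ n.lt_add_one
    have := apply_succ_le_of_mem_topSimplePerms hπ'
    omega

/-- Split according to whether the letter `n` of the word stands after or before `n + 1`. -/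
lemma topSimplePerms_succ_subset (n : ℕ) : topSimplePerms (n + 1) ⊆
    (· * adjSwap (n + 1)) '' simplePerms (n + 1) ∪ (adjSwap (n + 1) * ·) '' topSimplePerms n := by
  rintro _ ⟨w, hw, hwn, htop, rfl⟩
  obtain ⟨s, t, rfl⟩ := List.append_of_mem htop
  obtain ⟨hst, hnd⟩ := List.nodup_cons.mp (List.nodup_middle.mp hw)
  have hle : ∀ a ∈ s ++ t, 1 ≤ a ∧ a ≤ n := fun a ha => by
    have := hwn a (((List.sublist_cons_self (n + 1) t).append_left s).subset ha)
    have : a ≠ n + 1 := fun h => hst (h ▸ ha)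
    omega
  by_cases hn : n ∈ t
  · have hns : n ∉ s := fun h => (List.nodup_append.mp hnd).2.2 n h n hn rfl
    refine Or.inr ⟨_, ⟨s ++ t, hnd, hle, List.mem_append_right s hn, rfl⟩,
      (List.prod_map_append_cons_eq_mul_prod adjSwap s t fun b hb => ?_).symm⟩
    have := hle b (List.mem_append_left t hb)
    have : b ≠ n := fun h => hns (h ▸ hb)
    exact (commute_adjSwap (by omega)).symm
  · refine Or.inl ⟨_, ⟨s ++ t, hnd, fun a ha => ⟨(hle a ha).1, Nat.lt_succ_of_le (hle a ha).2⟩,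
      rfl⟩, (List.prod_map_append_cons_eq_prod_mul adjSwap s t fun b hb => ?_).symm⟩
    have := hle b (List.mem_append_right s hb)
    have : b ≠ n := fun h => hn (h ▸ hb)
    exact (commute_adjSwap (by omega)).symm

lemma image_union_image_subset_topSimplePerms_succ (n : ℕ) :
    (· * adjSwap (n + 1)) '' simplePerms (n + 1) ∪ (adjSwap (n + 1) * ·) '' topSimplePerms n ⊆
      topSimplePerms (n + 1) := by
  rintro _ (⟨_, ⟨w, hw, hwn, rfl⟩, rfl⟩ | ⟨_, ⟨w, hw, hwn, -, rfl⟩, rfl⟩)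
  · refine ⟨w ++ [n + 1], ?_, fun a ha => ?_, by simp, by simp⟩
    · simpa using hw.concat fun h => by have := (hwn _ h).2; omega
    · rcases List.mem_append.mp ha with ha | ha
      · have := hwn a ha; omega
      · rw [List.mem_singleton.mp ha]; omega
  · refine ⟨(n + 1) :: w, ?_, fun a ha => ?_, List.mem_cons_self, by simp⟩
    · exact List.nodup_cons.mpr ⟨fun h => by have := (hwn _ h).2; omega, hw⟩
    · rcases List.mem_cons.mp ha with rfl | ha
      · omega
      · have := hwn a ha; omega

lemma topSimplePerms_succ (n : ℕ) : topSimplePerms (n + 1) =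
    (· * adjSwap (n + 1)) '' simplePerms (n + 1) ∪ (adjSwap (n + 1) * ·) '' topSimplePerms n :=
  (topSimplePerms_succ_subset n).antisymm (image_union_image_subset_topSimplePerms_succ n)

lemma disjoint_topSimplePerms_succ (n : ℕ) :
    Disjoint ((· * adjSwap (n + 1)) '' simplePerms (n + 1))
      ((adjSwap (n + 1) * ·) '' topSimplePerms n) :=
  Set.disjoint_left.mpr fun _ ⟨δ, hδ, hπ⟩ ⟨ρ, hρ, hπ'⟩ => by
    have h := congrArg (· (n + 1)) (hπ.trans hπ'.symm)
    have hδ' := apply_of_mem_simplePerms hδ (n + 1).lt_add_one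
    have hρ' := apply_succ_le_of_mem_topSimplePerms hρ
    simp only [Perm.mul_apply, adjSwap_apply_self, hδ',
      adjSwap_apply_of_ne (i := n + 1) (x := ρ (n + 1)) (by omega) (by omega)] at h
    omega

theorem encard_simplePerms_succ_and_encard_topSimplePerms (n : ℕ) :
    (simplePerms (n + 1)).encard = Nat.fib (2 * n + 1) ∧
      (topSimplePerms n).encard = Nat.fib (2 * n) := by
  induction n with
  | zero => simp [simplePerms_succ, simplePerms_zero, topSimplePerms_zero]
  | succ n ih =>
    have htop : (topSimplePerms (n + 1)).encard = Nat.fib (2 * (n + 1)) := by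
      rw [topSimplePerms_succ, Set.encard_union_eq (disjoint_topSimplePerms_succ n),
        (mul_left_injective _).injOn.encard_image, (mul_right_injective _).injOn.encard_image,
        ih.1, ih.2, show 2 * (n + 1) = 2 * n + 2 by ring, Nat.fib_add_two]
      push_cast
      ring
    refine ⟨?_, htop⟩
    rw [simplePerms_succ, Set.encard_union_eq (disjoint_simplePerms_topSimplePerms _), ih.1, htop,
      show 2 * (n + 1) + 1 = 2 * n + 1 + 2 by ring, Nat.fib_add_two,
      show 2 * n + 1 + 1 = 2 * (n + 1) by ring]
    push_cast
    ring

theorem encard_SB_succ (n : ℕ) : (SB (n + 1)).encard = Nat.fib (2 * n + 1) := by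
  rw [← (braidPerm_injOn_SB _).encard_image, image_braidPerm_SB]
  exact (encard_simplePerms_succ_and_encard_topSimplePerms n).1

lemma braidPerm_apply_of_mem_SB {n x : ℕ} {β : MB} (hβ : β ∈ SB n) (hx : n < x) :
    braidPerm β x = x :=
  apply_of_mem_simplePerms (image_braidPerm_SB n ▸ Set.mem_image_of_mem braidPerm hβ) hx

lemma injOn_mul_X_SB (m : ℕ) : Set.InjOn (· * X (m + 1)) (SB m) := fun β hβ β' hβ' h => by
  have := congrArg braidPerm h
  simp only [map_mul, braidPerm_X (Nat.le_add_left 1 m)] at this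
  exact braidPerm_injOn_SB m hβ hβ' (mul_right_cancel this)

lemma disjoint_SB_image_mul_X (m : ℕ) : Disjoint (SB m) ((· * X (m + 1)) '' SB m) :=
  Set.disjoint_left.mpr fun β hβ ⟨β', hβ', h⟩ => by
    have := congrArg (braidPerm · (m + 1)) h
    simp only [map_mul, braidPerm_X (Nat.le_add_left 1 m), Perm.mul_apply, adjSwap_apply_self,
      braidPerm_apply_of_mem_SB hβ m.lt_add_one,
      braidPerm_apply_of_mem_SB hβ' (show m < m + 1 + 1 by omega)] at this
    omega

/-- Lemma 2.7 b): `c_n(x_{n-1}) = 2 · F_{2n-5}` for all `n ≥ 3`. -/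
theorem card_centralizer_top_gen_in_SBn (n : ℕ) (hn : 3 ≤ n) :
    c n (X (n - 1)) = 2 * Nat.fib (2 * n - 5) := by
  obtain ⟨k, rfl⟩ : ∃ k, n = k + 3 := ⟨n - 3, by omega⟩
  have hC : C (k + 3) (X (k + 3 - 1)) = SB (k + 1) ∪ (· * X (k + 2)) '' SB (k + 1) :=
    C_succ_succ_X_succ (k + 1)
  rw [c, Set.ncard_def, hC, Set.encard_union_eq (disjoint_SB_image_mul_X _),
    (injOn_mul_X_SB _).encard_image, encard_SB_succ, show 2 * (k + 3) - 5 = 2 * k + 1 by omega,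
    ← two_mul]
  norm_cast
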